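/- arXiv:2503.18615 — 2 statements merged into one kernel-verified Lean document; each statement's English description precedes it below -/
import Mathlib

section
/- Let U be a (non-principal) ultrafilter on ω and κ < b(U) an infinite cardinal. A union of κ-many U-scales is again a U-scale. -/
open Set Filter

/-- The increasing enumeration of a set of naturals. -/
noncomputable def enum (s : Set ℕ) : ℕ → ℕ := Nat.nth (· ∈ s)

/-- `a ≤_U b`: the set of `n` with `a(n) ≤ b(n)` belongs to the ultrafilter `U`. -/
def leU (U : Ultrafilter ℕ) (a b : Set ℕ) : Prop := {n : ℕ | enum a n ≤ enum b n} ∈ U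

/-- `𝔟(U)`: the least cardinality of a subset of `[ω]^ω` not `≤_U`-bounded by a
single element of `[ω]^ω`. -/
noncomputable def bU (U : Ultrafilter ℕ) : Cardinal :=
  sInf { c : Cardinal | ∃ A : Set (Set ℕ), (∀ a ∈ A, a.Infinite) ∧ Cardinal.mk A = c ∧
    ¬ ∃ b : Set ℕ, b.Infinite ∧ ∀ a ∈ A, leU U a b }

section lemmas
variable {U : Ultrafilter ℕ}

lemma enum_strictMono {s : Set ℕ} (hs : s.Infinite) : StrictMono (enum s) :=
  Nat.nth_strictMono hs

lemma leU_refl (U : Ultrafilter ℕ) (a : Set ℕ) : leU U a a := by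
  simp only [leU, le_refl, Set.setOf_true]
  exact Filter.univ_mem

lemma leU_trans {a b c : Set ℕ} (h1 : leU U a b) (h2 : leU U b c) : leU U a c := by
  have := Filter.inter_mem h1 h2
  refine Filter.mem_of_superset this ?_
  intro n hn
  simp only [Set.mem_inter_iff, Set.mem_setOf_eq] at hn ⊢
  exact le_trans hn.1 hn.2

lemma leU_of_not_leU {a b : Set ℕ} (h : ¬ leU U a b) : leU U b a := by
  rw [leU, ← Ultrafilter.compl_mem_iff_notMem] at h
  refine Filter.mem_of_superset h ?_
  intro n hn
  simp only [Set.mem_compl_iff, Set.mem_setOf_eq] at hn ⊢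
  exact le_of_not_ge hn

lemma enum_range {f : ℕ → ℕ} (hf : StrictMono f) : enum (Set.range f) = f := by
  have hinf : (Set.range f).Infinite := Set.infinite_range_of_injective hf.injective
  exact (StrictMono.range_inj (Nat.nth_strictMono hinf) hf).mp
    (Nat.range_nth_of_infinite hinf)

lemma bounded_of_lt {A : Set (Set ℕ)} (hInf : ∀ a ∈ A, a.Infinite)
    (h : Cardinal.mk A < bU U) : ∃ b : Set ℕ, b.Infinite ∧ ∀ a ∈ A, leU U a b := by
  by_contra hb
  have : Cardinal.mk A ∈ { c : Cardinal | ∃ A : Set (Set ℕ), (∀ a ∈ A, a.Infinite) ∧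
      Cardinal.mk A = c ∧ ¬ ∃ b : Set ℕ, b.Infinite ∧ ∀ a ∈ A, leU U a b } :=
    ⟨A, hInf, rfl, hb⟩
  exact absurd (csInf_le' this) (not_le_of_gt h)

lemma bU_set_nonempty (U : Ultrafilter ℕ) :
    { c : Cardinal | ∃ A : Set (Set ℕ), (∀ a ∈ A, a.Infinite) ∧ Cardinal.mk A = c ∧
      ¬ ∃ b : Set ℕ, b.Infinite ∧ ∀ a ∈ A, leU U a b }.Nonempty := by
  refine ⟨_, {a : Set ℕ | a.Infinite}, fun a ha => ha, rfl, ?_⟩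
  rintro ⟨b, hb, hbd⟩
  have hsm : StrictMono (fun n => enum b n + 1) :=
    fun m n h => Nat.succ_lt_succ (enum_strictMono hb h)
  set a : Set ℕ := Set.range (fun n => enum b n + 1) with ha
  have hainf : a.Infinite := Set.infinite_range_of_injective hsm.injective
  have := hbd a hainf
  rw [leU, ha, enum_range hsm] at this
  have h0 : (∅ : Set ℕ) ∈ U := by
    convert this using 2
    ext n
    simp [Nat.succ_le_iff]
  exact Filter.empty_notMem (U : Filter ℕ) h0

end lemmas

lemma bU_regular (U : Ultrafilter ℕ) (h0 : Cardinal.aleph0 < bU U) : (bU U).IsRegular := by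
  refine ⟨h0.le, ?_⟩
  by_contra hcof
  push_neg at hcof
  have hmem := csInf_mem (bU_set_nonempty U)
  obtain ⟨A, hAinf, hAcard, hAunb⟩ := hmem
  set β := bU U with hβ
  have hcardT : Cardinal.mk β.ord.ToType = Cardinal.mk A := by
    rw [Cardinal.mk_toType, Cardinal.card_ord, hAcard]; rfl
  obtain ⟨e⟩ := Cardinal.eq.mp hcardT
  obtain ⟨S, hSunb, hScard⟩ := Order.exists_cof_eq β.ord.ToType
  rw [Ordinal.cof_toType] at hScard
  have hIic : ∀ s : β.ord.ToType, Cardinal.mk (Set.Iic s) < β := by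
    intro s
    have h1 : Cardinal.mk (Set.Iio s) < β := by
      have ht := @Ordinal.typein_lt_type β.ord.ToType (· < ·) isWellOrder_lt s
      rw [Ordinal.type_toType] at ht
      have h2 := Cardinal.lt_ord.mp ht
      rw [@Ordinal.card_typein β.ord.ToType (· < ·) isWellOrder_lt s] at h2
      exact h2
    rw [← Set.Iio_insert]
    exact lt_of_le_of_lt (Cardinal.mk_insert_le)
      (Cardinal.add_lt_of_lt h0.le h1 (lt_of_lt_of_le Cardinal.one_lt_aleph0 h0.le))
  have hsub : ∀ s : β.ord.ToType, ∃ b : Set ℕ, b.Infinite ∧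
      ∀ a ∈ (fun t : β.ord.ToType => ((e t : A) : Set ℕ)) '' (Set.Iic s), leU U a b := by
    intro s
    apply bounded_of_lt
    · rintro a ⟨t, _, rfl⟩; exact hAinf _ (e t).2
    · exact lt_of_le_of_lt Cardinal.mk_image_le (hIic s)
  choose b hbinf hb using hsub
  obtain ⟨b', hb'inf, hb'⟩ : ∃ b' : Set ℕ, b'.Infinite ∧ ∀ a ∈ b '' S, leU U a b' := by
    apply bounded_of_lt
    · rintro a ⟨s, _, rfl⟩; exact hbinf s
    · exact lt_of_le_of_lt Cardinal.mk_image_le (by rw [hScard]; exact hcof)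
  apply hAunb
  refine ⟨b', hb'inf, ?_⟩
  intro a ha
  obtain ⟨s, hsS, hs⟩ := hSunb (e.symm ⟨a, ha⟩)
  have h1 : leU U a (b s) := hb s a ⟨e.symm ⟨a, ha⟩, hs, by simp⟩
  exact leU_trans h1 (hb' (b s) ⟨s, hsS, rfl⟩)

/-- `X ⊆ [ω]^ω` is a `U`-scale (for an ultrafilter `U`, `U⁺ = U`, so `d ≤_{U⁺} c`
becomes `d ≤_U c`): `|X| ≥ 𝔟(U)` and for each `d ∈ [ω]^ω` there are `c ∈ [ω]^ω` and
`S ⊆ X`, `|S| < 𝔟(U)`, with `d ≤_U c` and `c ≤_U x` for all `x ∈ X \ S`. -/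
def IsUScale (U : Ultrafilter ℕ) (X : Set (Set ℕ)) : Prop :=
  (∀ x ∈ X, x.Infinite) ∧ bU U ≤ Cardinal.mk X ∧
  ∀ d : Set ℕ, d.Infinite → ∃ c : Set ℕ, c.Infinite ∧ ∃ S ⊆ X, Cardinal.mk S < bU U ∧
    leU U d c ∧ ∀ x ∈ X \ S, leU U c x

/-- For a non-principal ultrafilter `U` on `ω` and an infinite cardinal `κ < 𝔟(U)`,
a union of `κ`-many `U`-scales is again a `U`-scale. -/
theorem stmt4 (U : Ultrafilter ℕ) (hU : (↑U : Filter ℕ) ≤ Filter.cofinite)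
    (κ : Cardinal) (hκ : Cardinal.aleph0 ≤ κ) (hlt : κ < bU U)
    (ι : Type) (hι : Cardinal.mk ι = κ) (Xs : ι → Set (Set ℕ))
    (hXs : ∀ i, IsUScale U (Xs i)) : IsUScale U (⋃ i, Xs i) := by
  have hreg : (bU U).IsRegular := bU_regular U (lt_of_le_of_lt hκ hlt)
  have hικ : Cardinal.mk ι < bU U := by rw [hι]; exact hlt
  obtain ⟨i₀⟩ : Nonempty ι := Cardinal.mk_ne_zero_iff.mp
    (by rw [hι]; exact (Cardinal.aleph0_pos.trans_le hκ).ne')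
  refine ⟨?_, ?_, ?_⟩
  · intro x hx
    obtain ⟨i, hi⟩ := Set.mem_iUnion.mp hx
    exact (hXs i).1 x hi
  · exact le_trans (hXs i₀).2.1 (Cardinal.mk_le_mk_of_subset (Set.subset_iUnion Xs i₀))
  · intro d hd
    obtain ⟨c, hc, S₀, _, _, hdc, _⟩ := (hXs i₀).2.2 d hd
    choose ci hci Si hSisub hSicard hcci hSi using fun i => (hXs i).2.2 c hc
    refine ⟨c, hc, ⋃ i, Si i, Set.iUnion_mono hSisub, ?_, hdc, ?_⟩
    · refine lt_of_le_of_lt (Cardinal.mk_iUnion_le _) ?_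
      have hsup : (⨆ i, Cardinal.mk (Si i)) < bU U :=
        Cardinal.iSup_lt_of_isRegular hreg hικ hSicard
      exact Cardinal.mul_lt_of_lt hreg.aleph0_le hικ hsup
    · rintro x ⟨hx, hxS⟩
      obtain ⟨i, hi⟩ := Set.mem_iUnion.mp hx
      have hxSi : x ∉ Si i := fun h => hxS (Set.mem_iUnion.mpr ⟨i, h⟩)
      exact leU_trans (hcci i) (hSi i x ⟨hi, hxSi⟩)
end

section
/- Let A be a set of reals with |A| < d, k a natural number, Y a set of reals satisfying S₁(Γ_Borel, Γ_Borel), and for each n let U_n = { U_{n,m} : m ∈ ω } be a γ-cover of (A ∪ Fin)_M^k × Y by open sets. Then there are sets U_n ∈ U_n (n ∈ ω) such that for every finite F ⊆ A there is a subfamily of { U_n : n ∈ ω } which is a γ-cover of (F ∪ Fin)_M^k × Y. -/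
open Set Filter Topology

/-- The Cantor space `P(ω) ≅ 2^ω`. -/
abbrev Cant : Type := ℕ → Bool

/-- The subset of `ω` coded by a point of the Cantor space. -/
def memSet (x : Cant) : Set ℕ := {n : ℕ | x n = true}

/-- `x` codes an infinite subset of `ω`. -/
def InfinC (x : Cant) : Prop := (memSet x).Infinite

/-- The points of `P(ω)` coding finite sets. -/
def FinC : Set Cant := {x : Cant | (memSet x).Finite}

/-- The Michael topology on `P(ω)`. -/
def michael : TopologicalSpace Cant :=
  TopologicalSpace.generateFrom
    ({U : Set Cant | IsOpen U} ∪ {s : Set Cant | ∃ x, InfinC x ∧ s = {x}})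

/-- The product topology on `P(ω)^k × P(ω)`, Michael topology on the first `k`
coordinates, standard topology on the last. -/
def michaelProd (k : ℕ) : TopologicalSpace ((Fin k → Cant) × Cant) :=
  @instTopologicalSpaceProd _ _
    (@Pi.topologicalSpace (Fin k) (fun _ => Cant) (fun _ => michael)) inferInstance

/-- The dominating number `𝔡`. -/
noncomputable def fd : Cardinal :=
  sInf { c : Cardinal | ∃ D : Set (ℕ → ℕ), Cardinal.mk D = c ∧
    ∀ f : ℕ → ℕ, ∃ g ∈ D, ∀ᶠ n in atTop, f n ≤ g n }

/-- A countable Borel `γ`-cover of `Y`. -/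
def BorelGammaCover (Y : Set Cant) (U : ℕ → Set Cant) : Prop :=
  (∀ n, MeasurableSet (U n)) ∧ (Set.range U).Infinite ∧
  ∀ y ∈ Y, ∀ᶠ n in atTop, y ∈ U n

/-- `Y` satisfies `S₁(Γ_Borel, Γ_Borel)`. -/
def S1GBorGBor (Y : Set Cant) : Prop :=
  ∀ U : ℕ → ℕ → Set Cant, (∀ n, BorelGammaCover Y (U n)) →
    ∃ f : ℕ → ℕ, BorelGammaCover Y (fun n => U n (f n))

/-- A countable open `γ`-cover of `Z^k × Y` in the Michael product topology. -/
def MGammaCover (k : ℕ) (Z Y : Set Cant) (U : ℕ → Set ((Fin k → Cant) × Cant)) : Prop :=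
  (∀ n, IsOpen[michaelProd k] (U n)) ∧ (Set.range U).Infinite ∧
  ∀ p : (Fin k → Cant) × Cant, (∀ i, p.1 i ∈ Z) → p.2 ∈ Y → ∀ᶠ n in atTop, p ∈ U n

-- AUX START
lemma section_open {k : ℕ} (x : Fin k → Cant) {S : Set ((Fin k → Cant) × Cant)}
    (hS : IsOpen[michaelProd k] S) : IsOpen {y : Cant | (x, y) ∈ S} := by
  letI M : TopologicalSpace (Fin k → Cant) :=
    @Pi.topologicalSpace (Fin k) (fun _ => Cant) (fun _ => michael)
  have hc : Continuous (fun y : Cant => ((x, y) : (Fin k → Cant) × Cant)) :=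
    Continuous.prodMk continuous_const continuous_id
  exact hc.isOpen_preimage S hS

def cpt (j : ℕ) : Cant := fun i => decide (i = j)

lemma cpt_inj : Function.Injective cpt := by
  intro a b h
  have := congrFun h a
  simpa [cpt] using this.symm

lemma cpt_finC (j : ℕ) : cpt j ∈ FinC := by
  have : memSet (cpt j) ⊆ {j} := by
    intro n hn
    simpa [memSet, cpt] using hn
  exact (Set.finite_singleton j).subset this

lemma memSet_inj : Function.Injective memSet := by
  intro x y h
  funext n
  have hx : (n ∈ memSet x) = (n ∈ memSet y) := by rw [h]
  simp only [memSet, mem_setOf_eq] at hx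
  cases hxn : x n <;> cases hyn : y n <;> simp_all

lemma FinC_countable : FinC.Countable := by
  have h : ∀ x : ↥FinC, ∃ F : Finset ℕ, (↑F : Set ℕ) = memSet (x : Cant) :=
    fun x => ⟨x.2.toFinset, x.2.coe_toFinset⟩
  choose t ht using h
  have hinj : Function.Injective t := by
    intro a b hab
    apply Subtype.ext
    apply memSet_inj
    rw [← ht a, ← ht b, hab]
  exact Set.countable_coe_iff.mp (hinj.comp (fun _ _ => id) |>.countable)

lemma fd_mem : fd ∈ { c : Cardinal | ∃ D : Set (ℕ → ℕ), Cardinal.mk D = c ∧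
    ∀ f : ℕ → ℕ, ∃ g ∈ D, ∀ᶠ n in atTop, f n ≤ g n } := by
  apply csInf_mem
  exact ⟨Cardinal.mk (Set.univ : Set (ℕ → ℕ)), Set.univ, rfl,
    fun f => ⟨f, mem_univ f, Eventually.of_forall fun n => le_rfl⟩⟩

lemma fd_le_of_dominating (D : Set (ℕ → ℕ))
    (h : ∀ f : ℕ → ℕ, ∃ g ∈ D, ∀ᶠ n in atTop, f n ≤ g n) : fd ≤ Cardinal.mk D :=
  csInf_le' ⟨D, rfl, h⟩

lemma aleph0_lt_fd : Cardinal.aleph0 < fd := by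
  obtain ⟨D, hmk, hdom⟩ := fd_mem
  rw [← hmk]
  rw [lt_iff_not_ge]
  intro hle
  have hc : D.Countable := by
    rw [← Set.countable_coe_iff] at *
    exact Cardinal.mk_le_aleph0_iff.mp hle
  have hne : D.Nonempty := by
    obtain ⟨g, hg, _⟩ := hdom 0
    exact ⟨g, hg⟩
  obtain ⟨G, hG⟩ := hc.exists_eq_range hne
  obtain ⟨g, hgD, h⟩ := hdom (fun n => (Finset.range (n+1)).sup (fun j => G j n) + 1)
  obtain ⟨N, hN⟩ := eventually_atTop.mp h
  rw [hG] at hgD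
  obtain ⟨j, rfl⟩ := hgD
  have h1 := hN (max j N) (le_max_right _ _)
  have h2 : G j (max j N) ≤ (Finset.range (max j N + 1)).sup (fun i => G i (max j N)) :=
    Finset.le_sup (f := fun i => G i (max j N)) (Finset.mem_range.mpr (by omega))
  omega
-- AUX END

-- KEY START
/-- `V n m = ⋂ i ≥ m, U n i`. -/
def Vset {k : ℕ} (U : ℕ → ℕ → Set ((Fin k → Cant) × Cant)) (n m : ℕ) :
    Set ((Fin k → Cant) × Cant) := ⋂ i ∈ Ici m, U n i

lemma mem_Vset {k : ℕ} {U : ℕ → ℕ → Set ((Fin k → Cant) × Cant)} {n m : ℕ}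
    {p : (Fin k → Cant) × Cant} : p ∈ Vset U n m ↔ ∀ i, m ≤ i → p ∈ U n i := by
  simp [Vset]

lemma Vset_mono {k : ℕ} {U : ℕ → ℕ → Set ((Fin k → Cant) × Cant)} {n m m' : ℕ}
    (h : m ≤ m') : Vset U n m ⊆ Vset U n m' := fun p hp =>
  mem_Vset.mpr fun i hi => mem_Vset.mp hp i (h.trans hi)

lemma Vset_subset {k : ℕ} {U : ℕ → ℕ → Set ((Fin k → Cant) × Cant)} {n m i : ℕ}
    (h : m ≤ i) : Vset U n m ⊆ U n i := fun p hp => mem_Vset.mp hp i h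

lemma key_bound {A Y : Set Cant} (hY : S1GBorGBor Y) {k : ℕ}
    {U : ℕ → ℕ → Set ((Fin k → Cant) × Cant)}
    (hU : ∀ n, MGammaCover k (A ∪ FinC) Y (U n))
    (x : Fin k → Cant) (hx : ∀ i, x i ∈ A ∪ FinC) :
    ∃ b : ℕ → ℕ, ∀ y ∈ Y, ∀ᶠ n in atTop, (x, y) ∈ Vset U n (b n) := by
  classical
  have hVev : ∀ y ∈ Y, ∀ n, ∃ m, (x, y) ∈ Vset U n m := by
    intro y hy n
    obtain ⟨m0, hm0⟩ := eventually_atTop.mp ((hU n).2.2 (x, y) hx hy)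
    exact ⟨m0, mem_Vset.mpr fun i hi => hm0 i hi⟩
  -- the padded section covers
  set D' : ℕ → ℕ → Set Cant := fun n m =>
    (({y | (x, y) ∈ Vset U n m} ∪ cpt '' Iio m) \ (cpt '' Ici m)) with hD'
  have hcov : ∀ n, BorelGammaCover Y (D' n) := by
    intro n
    refine ⟨?_, ?_, ?_⟩
    · intro m
      have h1 : MeasurableSet {y : Cant | (x, y) ∈ Vset U n m} := by
        have he : {y : Cant | (x, y) ∈ Vset U n m}
            = ⋂ i ∈ Ici m, {y : Cant | (x, y) ∈ U n i} := by
          ext y; simp [mem_Vset, mem_iInter]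
        rw [he]
        exact MeasurableSet.biInter (to_countable _)
          (fun i _ => (section_open x ((hU n).1 i)).measurableSet)
      exact (h1.union (((finite_Iio m).image cpt).measurableSet)).diff
        (((Ici m).to_countable.image cpt).measurableSet)
    · apply Set.infinite_range_of_injective
      have hkey : ∀ m1 m2 : ℕ, m1 < m2 → cpt m1 ∈ D' n m2 ∧ cpt m1 ∉ D' n m1 := by
        intro m1 m2 hlt
        constructor
        · refine ⟨Or.inr ⟨m1, hlt, rfl⟩, ?_⟩
          rintro ⟨i, hi, hie⟩
          have := cpt_inj hie
          simp only [mem_Ici] at hi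
          omega
        · rintro ⟨-, h2⟩
          exact h2 ⟨m1, mem_Ici.mpr le_rfl, rfl⟩
      intro m1 m2 h
      by_contra hne
      rcases Nat.lt_or_ge m1 m2 with hlt | hge
      · obtain ⟨ha, hb⟩ := hkey m1 m2 hlt
        rw [← h] at ha
        exact hb ha
      · have hlt : m2 < m1 := by omega
        obtain ⟨ha, hb⟩ := hkey m2 m1 hlt
        rw [h] at ha
        exact hb ha
    · intro y hy
      obtain ⟨m0, hm0⟩ := hVev y hy n
      have h2 : ∀ᶠ m in atTop, y ∉ cpt '' Ici m := by
        by_cases hyc : ∃ j, y = cpt j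
        · obtain ⟨j, rfl⟩ := hyc
          filter_upwards [eventually_ge_atTop (j + 1)] with m hm
          rintro ⟨i, hi, hie⟩
          have := cpt_inj hie
          simp only [mem_Ici] at hi
          omega
        · exact Eventually.of_forall fun m ⟨i, _, hie⟩ => hyc ⟨i, hie.symm⟩
      filter_upwards [eventually_ge_atTop m0, h2] with m hm hm2
      exact ⟨Or.inl (Vset_mono hm hm0), hm2⟩
  obtain ⟨g, hg⟩ := hY D' hcov
  refine ⟨fun n => max (g n) ((Finset.range (n + 1)).sup
      (fun j => sInf {m | (x, cpt j) ∈ Vset U n m})), ?_⟩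
  intro y hy
  by_cases hyc : ∃ j, y = cpt j
  · obtain ⟨j, rfl⟩ := hyc
    filter_upwards [eventually_ge_atTop j] with n hn
    have hne : {m | (x, cpt j) ∈ Vset U n m}.Nonempty := hVev _ hy n
    have h1 : (x, cpt j) ∈ Vset U n (sInf {m | (x, cpt j) ∈ Vset U n m}) :=
      Nat.sInf_mem hne
    refine Vset_mono ?_ h1
    refine le_trans ?_ (le_max_right _ _)
    exact Finset.le_sup (f := fun j => sInf {m | (x, cpt j) ∈ Vset U n m})
      (Finset.mem_range.mpr (by omega))
  · filter_upwards [hg.2.2 y hy] with n hn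
    obtain ⟨h1 | h1, h2⟩ := hn
    · exact Vset_mono (le_max_left _ _) h1
    · exact absurd (by obtain ⟨i, _, hie⟩ := h1; exact ⟨i, hie.symm⟩) hyc
-- KEY END

lemma mk_finsets_lt (A : Set Cant) (hA : Cardinal.mk A < fd) :
    Cardinal.mk {F : Finset Cant | ↑F ⊆ A} < fd := by
  classical
  have hle : Cardinal.mk {F : Finset Cant | ↑F ⊆ A} ≤ Cardinal.mk (Finset ↥A) := by
    apply Cardinal.mk_le_of_injective (f := fun F : {F : Finset Cant | ↑F ⊆ A} =>
      Finset.subtype (· ∈ A) F.1)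
    intro F1 F2 h
    apply Subtype.ext
    have e1 : (F1.1.subtype (· ∈ A)).map (Function.Embedding.subtype _)
        = F1.1.filter (· ∈ A) := Finset.subtype_map _
    have e2 : (F2.1.subtype (· ∈ A)).map (Function.Embedding.subtype _)
        = F2.1.filter (· ∈ A) := Finset.subtype_map _
    have f1 : F1.1.filter (· ∈ A) = F1.1 :=
      Finset.filter_true_of_mem fun a ha => F1.2 ha
    have f2 : F2.1.filter (· ∈ A) = F2.1 :=
      Finset.filter_true_of_mem fun a ha => F2.2 ha
    rw [← f1, ← f2, ← e1, ← e2]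
    exact congrArg _ h
  refine lt_of_le_of_lt hle ?_
  rcases finite_or_infinite ↥A with hf | hi
  · exact lt_of_le_of_lt Cardinal.mk_le_aleph0 aleph0_lt_fd
  · rw [Cardinal.mk_finset_of_infinite]
    exact hA


/-- Lemma: let `A ⊆ [ω]^ω` with `|A| < 𝔡`, `k ∈ ω`, `Y` satisfying
`S₁(Γ_Borel, Γ_Borel)`, and for each `n` let `𝒰 n = {U n m : m}` be an open `γ`-cover
of `(A ∪ Fin)_M^k × Y`. Then one can select `U n (f n) ∈ 𝒰 n` such that for every
finite `F ⊆ A` some subfamily of the selection is a `γ`-cover of `(F ∪ Fin)_M^k × Y`. -/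
theorem stmt14 (A : Set Cant) (hAinf : ∀ x ∈ A, InfinC x) (hA : Cardinal.mk A < fd)
    (k : ℕ) (Y : Set Cant) (hY : S1GBorGBor Y)
    (U : ℕ → ℕ → Set ((Fin k → Cant) × Cant))
    (hU : ∀ n, MGammaCover k (A ∪ FinC) Y (U n)) :
    ∃ f : ℕ → ℕ, ∀ F : Finset Cant, ↑F ⊆ A →
      ∃ T : Set ℕ, T.Infinite ∧
        ∀ p : (Fin k → Cant) × Cant, (∀ i, p.1 i ∈ ↑F ∪ FinC) → p.2 ∈ Y →
          {n ∈ T | p ∉ U n (f n)}.Finite := by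

  classical
  have keyF : ∀ F : Finset Cant, ↑F ⊆ A → ∃ bb : ℕ → ℕ,
      ∀ p : (Fin k → Cant) × Cant, (∀ i, p.1 i ∈ ↑F ∪ FinC) → p.2 ∈ Y →
        ∀ᶠ n in atTop, p ∈ Vset U n (bb n) := by
    intro F hF
    have hbex : ∀ x : Fin k → Cant, (∀ i, x i ∈ A ∪ FinC) →
        ∃ b : ℕ → ℕ, ∀ y ∈ Y, ∀ᶠ n in atTop, (x, y) ∈ Vset U n (b n) :=
      fun x hx => key_bound hY hU x hx
    choose! b hbP using hbex
    have hS : ((↑F : Set Cant) ∪ FinC).Countable := F.countable_toSet.union FinC_countable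
    have hXc : {x : Fin k → Cant | ∀ i, x i ∈ (↑F : Set Cant) ∪ FinC}.Countable :=
      Set.countable_pi fun _ => hS
    have hXne : {x : Fin k → Cant | ∀ i, x i ∈ (↑F : Set Cant) ∪ FinC}.Nonempty :=
      ⟨fun _ => cpt 0, fun i => Or.inr (cpt_finC 0)⟩
    obtain ⟨σ, hσ⟩ := hXc.exists_eq_range hXne
    refine ⟨fun n => (Finset.range (n + 1)).sup (fun j => b (σ j) n), ?_⟩
    rintro ⟨x, y⟩ hp1 hp2
    have hxm : x ∈ {x : Fin k → Cant | ∀ i, x i ∈ (↑F : Set Cant) ∪ FinC} := hp1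
    rw [hσ] at hxm
    obtain ⟨j, hj⟩ := hxm
    have hxA : ∀ i, x i ∈ A ∪ FinC := fun i => (hp1 i).imp (fun h => hF h) id
    filter_upwards [hbP x hxA y hp2, eventually_ge_atTop j] with n h1 h2
    refine Vset_mono ?_ h1
    have hs := Finset.le_sup (f := fun j => b (σ j) n)
      (Finset.mem_range.mpr (show j < n + 1 by omega))
    rw [← hj]
    exact hs
  choose! bF hbF using keyF
  have hdom : ∃ c : ℕ → ℕ, ∀ F : Finset Cant, ↑F ⊆ A → {n | bF F n ≤ c n}.Infinite := by
    by_contra hcon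
    push_neg at hcon
    have hd : ∀ f : ℕ → ℕ, ∃ g ∈ bF '' {F : Finset Cant | ↑F ⊆ A},
        ∀ᶠ n in atTop, f n ≤ g n := by
      intro f
      obtain ⟨F, hF, hfin⟩ := hcon f
      refine ⟨bF F, mem_image_of_mem _ hF, ?_⟩
      have hev : ∀ᶠ n in Filter.cofinite, ¬ (bF F n ≤ f n) :=
        Filter.eventually_cofinite.mpr (by simpa using hfin)
      rw [Nat.cofinite_eq_atTop] at hev
      filter_upwards [hev] with n hn
      omega
    have hled := fd_le_of_dominating _ hd
    have hlt : Cardinal.mk ↥(bF '' {F : Finset Cant | ↑F ⊆ A}) < fd :=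
      lt_of_le_of_lt Cardinal.mk_image_le (mk_finsets_lt A hA)
    exact absurd hled (not_le.mpr hlt)
  obtain ⟨c, hc⟩ := hdom
  refine ⟨c, fun F hF => ⟨{n | bF F n ≤ c n}, hc F hF, ?_⟩⟩
  intro p hp1 hp2
  obtain ⟨N, hN⟩ := eventually_atTop.mp (hbF F hF p hp1 hp2)
  apply Set.Finite.subset (Set.finite_Iio N)
  rintro n ⟨hnT, hnp⟩
  simp only [Set.mem_setOf_eq] at hnT
  by_contra hcon2
  simp only [Set.mem_Iio, not_lt] at hcon2
  exact hnp (Vset_subset hnT (hN n hcon2))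
end
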